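/- arXiv:2511.21457 — 6 statements merged into one kernel-verified Lean document; each statement's English description precedes it below -/
import Mathlib

section
/- Let p be a prime number and let u₁, u₂ ∈ ℚ_p^× be written as u₁ = v₁ · p^{l₁} and u₂ = v₂ · p^{l₂} with v₁, v₂ ∈ ℤ_p^× and l₁, l₂ ∈ ℤ. Then the following are equivalent: (i) for every positive integer n not divisible by p, the element u₁ · u₂^{-1} is an n-th power in ℚ_p^× (i.e. the classes of u₁ and u₂ in ℚ_p^×/(ℚ_p^×)^n agree for all such n); (ii) l₁ = l₂ and v₁ · v₂^{-1} ∈ 1 + pℤ_p. -/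
open Padic PadicInt

-- auxiliary: a unit of ℤ_[p] has valuation 0 as an element of ℚ_[p]
private lemma unit_coe_ne_zero {p : ℕ} [Fact p.Prime] (v : ℤ_[p]ˣ) :
    ((v : ℤ_[p]) : ℚ_[p]) ≠ 0 := by
  rw [PadicInt.coe_ne_zero]
  exact v.ne_zero

private lemma unit_coe_norm_one {p : ℕ} [Fact p.Prime] (v : ℤ_[p]ˣ) :
    ‖((v : ℤ_[p]) : ℚ_[p])‖ = 1 := by
  rw [PadicInt.padic_norm_e_of_padicInt]
  exact PadicInt.norm_units v

/-- Example 1.1: for `u₁ = v₁ · p^{l₁}` and `u₂ = v₂ · p^{l₂}` in `ℚ_p^×` with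
`v₁, v₂ ∈ ℤ_p^×`, the classes of `u₁` and `u₂` in `ℚ_p^×/(ℚ_p^×)^n` agree for all
positive `n` prime to `p` iff `l₁ = l₂` and `v₁ v₂⁻¹ ∈ 1 + pℤ_p`. -/
theorem stmt1 (p : ℕ) [Fact p.Prime] (v₁ v₂ : ℤ_[p]ˣ) (l₁ l₂ : ℤ) (u₁ u₂ : ℚ_[p])
    (hu₁ : u₁ = ((v₁ : ℤ_[p]) : ℚ_[p]) * (p : ℚ_[p]) ^ l₁)
    (hu₂ : u₂ = ((v₂ : ℤ_[p]) : ℚ_[p]) * (p : ℚ_[p]) ^ l₂) :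
    (∀ n : ℕ, 0 < n → ¬ (p ∣ n) → ∃ w : ℚ_[p], w ≠ 0 ∧ u₁ * u₂⁻¹ = w ^ n) ↔
      (l₁ = l₂ ∧ ∃ t : ℤ_[p], ((v₁ * v₂⁻¹ : ℤ_[p]ˣ) : ℤ_[p]) = 1 + (p : ℤ_[p]) * t) := by
  have hp := Fact.out (p := p.Prime)
  have hp2 : 2 ≤ p := hp.two_le
  have hpQ : (p : ℚ_[p]) ≠ 0 := Nat.cast_ne_zero.2 hp.ne_zero
  have hpR1 : (1 : ℝ) < (p : ℝ) := by exact_mod_cast hp.one_lt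
  have hpR0 : (0 : ℝ) < (p : ℝ) := by positivity
  have hpRne1 : (p : ℝ) ≠ 1 := ne_of_gt hpR1
  set V : ℤ_[p]ˣ := v₁ * v₂⁻¹ with hV
  -- u₁ * u₂⁻¹ = V * p^(l₁ - l₂)
  have hinv : ((((v₂⁻¹ : ℤ_[p]ˣ) : ℤ_[p])) : ℚ_[p]) = (((v₂ : ℤ_[p]) : ℚ_[p]))⁻¹ := by
    apply eq_inv_of_mul_eq_one_left
    rw [← PadicInt.coe_mul, ← Units.val_mul, inv_mul_cancel, Units.val_one, PadicInt.coe_one]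
  have key : u₁ * u₂⁻¹ = ((V : ℤ_[p]) : ℚ_[p]) * (p : ℚ_[p]) ^ (l₁ - l₂) := by
    rw [hu₁, hu₂, hV, _root_.mul_inv, Units.val_mul, PadicInt.coe_mul, hinv,
      ← zpow_neg, sub_eq_add_neg, zpow_add₀ hpQ]
    ring
  constructor
  · intro h
    -- Step 1 : l₁ = l₂
    have hdvd : ∀ n : ℕ, 0 < n → ¬ (p ∣ n) → (n : ℤ) ∣ (l₁ - l₂) := by
      intro n hn hpn
      obtain ⟨w, hw0, hw⟩ := h n hn hpn
      rw [key] at hw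
      have hnorm : ‖w‖ ^ n = (p : ℝ) ^ (-(l₁ - l₂)) := by
        rw [← _root_.norm_pow, ← hw, _root_.norm_mul, unit_coe_norm_one, one_mul, Padic.norm_p_zpow]
      rw [Padic.norm_eq_zpow_neg_valuation hw0, ← zpow_natCast, ← zpow_mul] at hnorm
      have := zpow_right_injective₀ hpR0 hpRne1 hnorm
      have h2 : -w.valuation * n = -(l₁ - l₂) := this
      exact ⟨w.valuation, by linarith⟩
    have hl : l₁ = l₂ := by
      set m : ℕ := (l₁ - l₂).natAbs + 1 with hm
      have hcases : ∃ n : ℕ, (l₁ - l₂).natAbs < n ∧ 0 < n ∧ ¬ (p ∣ n) := by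
        by_cases hc : p ∣ m
        · refine ⟨m + 1, by omega, by omega, fun hc' => ?_⟩
          have h1 : p ∣ 1 := by simpa using Nat.dvd_sub hc' hc
          exact hp.one_lt.ne' (Nat.dvd_one.mp h1)
        · exact ⟨m, by omega, by omega, hc⟩
      obtain ⟨n, hn1, hn2, hn3⟩ := hcases
      have := hdvd n hn2 hn3
      have h0 : l₁ - l₂ = 0 := by
        rcases this with ⟨c, hc⟩
        rcases eq_or_ne c 0 with rfl | hc0
        · simpa using hc
        · exfalso
          have : (n : ℤ) ≤ |l₁ - l₂| := by
            rw [hc, abs_mul, abs_of_nonneg (by positivity : (0:ℤ) ≤ (n:ℤ))]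
            nlinarith [abs_pos.2 hc0, Int.one_le_abs hc0]
          rw [Int.abs_eq_natAbs] at this
          omega
      omega
    refine ⟨hl, ?_⟩
    -- Step 2 : residue of V is 1
    have hkey : u₁ * u₂⁻¹ = ((V : ℤ_[p]) : ℚ_[p]) := by
      rw [key, hl, sub_self, zpow_zero, mul_one]
    have hn1 : 0 < p - 1 := by omega
    have hn2 : ¬ p ∣ (p - 1) := fun hd => by
      have := Nat.le_of_dvd hn1 hd; omega
    obtain ⟨w, hw0, hw⟩ := h (p - 1) hn1 hn2
    rw [hkey] at hw
    -- w has norm 1, hence is an integer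
    have hwn : ‖w‖ = 1 := by
      have h1 : ‖w‖ ^ (p - 1) = 1 := by
        rw [← _root_.norm_pow, ← hw, unit_coe_norm_one]
      rcases lt_trichotomy ‖w‖ 1 with hlt | heq | hgt
      · have := pow_lt_one₀ (norm_nonneg w) hlt (by omega : p - 1 ≠ 0)
        linarith
      · exact heq
      · have := one_lt_pow₀ hgt (by omega : p - 1 ≠ 0)
        linarith
    -- w is a p-adic integer
    set w' : ℤ_[p] := ⟨w, le_of_eq hwn⟩ with hw'
    have hw'pow : w' ^ (p - 1) = (V : ℤ_[p]) := by
      have : ((w' ^ (p - 1) : ℤ_[p]) : ℚ_[p]) = (((V : ℤ_[p]) : ℚ_[p])) := by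
        rw [PadicInt.coe_pow]
        exact hw.symm
      exact Subtype.coe_injective this
    -- apply the residue map
    have hres : (PadicInt.toZMod (V : ℤ_[p])) = 1 := by
      have h2 : (PadicInt.toZMod w') ^ (p - 1) = PadicInt.toZMod (V : ℤ_[p]) := by
        rw [← map_pow, hw'pow]
      have hVunit : IsUnit (PadicInt.toZMod (V : ℤ_[p])) :=
        (V.isUnit.map PadicInt.toZMod)
      have hwz : (PadicInt.toZMod w') ≠ 0 := by
        intro h0
        rw [h0, zero_pow (by omega : p - 1 ≠ 0)] at h2
        exact hVunit.ne_zero h2.symm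
      rw [← h2, ZMod.pow_card_sub_one_eq_one hwz]
    have hker : ((V : ℤ_[p]) - 1) ∈ RingHom.ker (PadicInt.toZMod : ℤ_[p] →+* ZMod p) := by
      rw [RingHom.mem_ker, map_sub, hres, map_one, sub_self]
    rw [PadicInt.ker_toZMod, PadicInt.maximalIdeal_eq_span_p, Ideal.mem_span_singleton] at hker
    obtain ⟨t, ht⟩ := hker
    exact ⟨t, by linear_combination ht⟩
  · intro ⟨hl, t, ht⟩
    intro n hn hpn
    have hkey : u₁ * u₂⁻¹ = ((V : ℤ_[p]) : ℚ_[p]) := by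
      rw [key, hl, sub_self, zpow_zero, mul_one]
    -- Hensel's lemma for F = Xⁿ - V at a = 1
    set F : Polynomial ℤ_[p] := Polynomial.X ^ n - Polynomial.C (V : ℤ_[p]) with hF
    have heval : F.eval 1 = 1 - (V : ℤ_[p]) := by simp [hF]
    have hderiv : F.derivative.eval 1 = (n : ℤ_[p]) := by
      simp [hF, Polynomial.derivative_X_pow]
    have hnormn : ‖(n : ℤ_[p])‖ = 1 := by
      refine le_antisymm (PadicInt.norm_le_one _) (le_of_not_gt fun hlt => ?_)
      have : ‖((n : ℤ) : ℤ_[p])‖ < 1 := by exact_mod_cast hlt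
      rw [PadicInt.norm_int_lt_one_iff_dvd] at this
      exact hpn (by exact_mod_cast this)
    have hcond : ‖F.eval 1‖ < ‖F.derivative.eval 1‖ ^ 2 := by
      rw [heval, hderiv, hnormn, one_pow]
      have : (1 : ℤ_[p]) - (V : ℤ_[p]) = (p : ℤ_[p]) * (-t) := by
        rw [ht]; ring
      rw [this, norm_mul, PadicInt.norm_p]
      calc ((p : ℝ))⁻¹ * ‖(-t : ℤ_[p])‖ ≤ ((p : ℝ))⁻¹ * 1 := by
            exact mul_le_mul_of_nonneg_left (PadicInt.norm_le_one _) (by positivity)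
        _ < 1 := by
            rw [mul_one]
            exact inv_lt_one_of_one_lt₀ hpR1
    obtain ⟨z, hz, -⟩ := hensels_lemma hcond
    have hzpow : z ^ n = (V : ℤ_[p]) := by
      have := hz
      rw [hF] at this
      simpa [sub_eq_zero] using this
    have hz0 : z ≠ 0 := by
      intro h0
      rw [h0, zero_pow (by omega : n ≠ 0)] at hzpow
      exact V.isUnit.ne_zero hzpow.symm
    refine ⟨(z : ℚ_[p]), (PadicInt.coe_ne_zero (x := z)).2 hz0, ?_⟩
    rw [hkey, ← hzpow, PadicInt.coe_pow]
end

section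
/- Let p be a prime number and let v ∈ ℤ_p^×. Then v ∈ 1 + pℤ_p if and only if for every positive integer n not divisible by p there exists w ∈ ℤ_p^× with v = w^n. Equivalently, the intersection over all positive integers n coprime to p of the subgroups (ℤ_p^×)^n of ℤ_p^× equals 1 + pℤ_p. -/
open Polynomial

namespace PadicInt

variable {p : ℕ} [Fact p.Prime]

theorem p_dvd_iff_toZMod_eq_zero {x : ℤ_[p]} : (p : ℤ_[p]) ∣ x ↔ toZMod x = 0 := by
  rw [← RingHom.mem_ker, ker_toZMod, maximalIdeal_eq_span_p, Ideal.mem_span_singleton]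

/-- Fermat's little theorem in `ℤ_p`. -/
theorem p_dvd_pow_sub_one_sub_one (w : ℤ_[p]ˣ) : (p : ℤ_[p]) ∣ (w : ℤ_[p]) ^ (p - 1) - 1 := by
  rw [p_dvd_iff_toZMod_eq_zero, map_sub, map_pow, map_one, sub_eq_zero]
  exact ZMod.pow_card_sub_one_eq_one (w.isUnit.map toZMod).ne_zero

/-- Hensel's lemma for `X ^ n - v` at the approximate root `1`: the derivative there is `n`,
a unit since `p ∤ n`, while the value `1 - v` is divisible by `p`. -/
theorem exists_pow_eq_of_p_dvd_sub_one {n : ℕ} (hpn : ¬ p ∣ n) {v : ℤ_[p]}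
    (hv : (p : ℤ_[p]) ∣ v - 1) : ∃ z : ℤ_[p], z ^ n = v := by
  have hderiv : ‖(X ^ n - C v).derivative.aeval (1 : ℤ_[p])‖ = 1 := by
    simpa [derivative_X_pow] using (Nat.coprime_or_dvd_of_prime Fact.out n).resolve_right hpn
  have hval :
      ‖(X ^ n - C v).aeval (1 : ℤ_[p])‖ < ‖(X ^ n - C v).derivative.aeval (1 : ℤ_[p])‖ ^ 2 := by
    rw [hderiv, one_pow, norm_lt_one_iff_dvd]
    simpa [dvd_sub_comm] using hv
  obtain ⟨z, hz, -⟩ := hensels_lemma hval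
  exact ⟨z, by simpa [sub_eq_zero] using hz⟩

theorem exists_units_pow_eq_of_p_dvd_sub_one {n : ℕ} (hpn : ¬ p ∣ n) {v : ℤ_[p]ˣ}
    (hv : (p : ℤ_[p]) ∣ v - 1) : ∃ w : ℤ_[p]ˣ, v = w ^ n := by
  obtain ⟨z, hz⟩ := exists_pow_eq_of_p_dvd_sub_one hpn hv
  have hn : n ≠ 0 := by rintro rfl; exact hpn (dvd_zero p)
  have hz_unit : IsUnit z := (isUnit_pow_iff hn).mp (hz ▸ v.isUnit)
  exact ⟨hz_unit.unit, Units.ext (by simp [hz])⟩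

end PadicInt

/-- A unit `v ∈ ℤ_p^×` lies in the group of principal units `1 + pℤ_p` iff it is an
`n`-th power in `ℤ_p^×` for every positive integer `n` not divisible by `p`. -/
theorem stmt2 (p : ℕ) [Fact p.Prime] (v : ℤ_[p]ˣ) :
    (∃ t : ℤ_[p], (v : ℤ_[p]) = 1 + (p : ℤ_[p]) * t) ↔
      ∀ n : ℕ, 0 < n → ¬ (p ∣ n) → ∃ w : ℤ_[p]ˣ, v = w ^ n := by
  have principal_iff :
      (∃ t : ℤ_[p], (v : ℤ_[p]) = 1 + (p : ℤ_[p]) * t) ↔ (p : ℤ_[p]) ∣ v - 1 := by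
    simp only [dvd_def, sub_eq_iff_eq_add']
  rw [principal_iff]
  refine ⟨fun hv n _ hpn => PadicInt.exists_units_pow_eq_of_p_dvd_sub_one hpn hv, fun h => ?_⟩
  have hp := (Fact.out : p.Prime).two_le
  obtain ⟨w, rfl⟩ := h (p - 1) (by omega) (Nat.not_dvd_of_pos_of_lt (by omega) (by omega))
  simpa using PadicInt.p_dvd_pow_sub_one_sub_one w
end

section
/- Let p be a prime number and let u₁, u₂ ∈ ℤ_p be nonzero, written as u₁ = v₁ · p^{l₁} and u₂ = v₂ · p^{l₂} with v₁, v₂ ∈ ℤ_p^× and l₁, l₂ ≥ 0 integers. Then the ideals (pX, X − u₁) and (pX, X − u₂) of the polynomial ring ℤ_p[X] are equal if and only if l₁ = l₂ and v₁ · v₂^{-1} ∈ 1 + pℤ_p. -/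
open Polynomial

lemma const_mem_iff (p : ℕ) [Fact p.Prime] (u c : ℤ_[p]) :
    (C c ∈ Ideal.span {(p : ℤ_[p][X]) * X, X - C u}) ↔ (p : ℤ_[p]) * u ∣ c := by
  rw [Ideal.mem_span_pair]
  constructor
  · rintro ⟨f, g, h⟩
    have h2 := congrArg (Polynomial.eval u) h
    simp at h2
    exact ⟨f.eval u, by linear_combination -h2⟩
  · rintro ⟨a, ha⟩
    refine ⟨C a, -(C ((p : ℤ_[p]) * a)), ?_⟩
    rw [← map_natCast (C : ℤ_[p] →+* ℤ_[p][X]) p]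
    rw [ha]
    simp [← C_mul]
    ring

lemma span_eq_iff (p : ℕ) [Fact p.Prime] (u₁ u₂ : ℤ_[p]) :
    (Ideal.span {(p : ℤ_[p][X]) * X, X - C u₁} =
        Ideal.span {(p : ℤ_[p][X]) * X, X - C u₂}) ↔
      ((p : ℤ_[p]) * u₁ ∣ u₁ - u₂ ∧ (p : ℤ_[p]) * u₂ ∣ u₁ - u₂) := by
  constructor
  · intro h
    constructor
    · rw [← const_mem_iff]
      have h1 : X - C u₂ ∈ Ideal.span {(p : ℤ_[p][X]) * X, X - C u₁} := by
        rw [h]; exact Ideal.subset_span (by simp)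
      have h2 : X - C u₁ ∈ Ideal.span {(p : ℤ_[p][X]) * X, X - C u₁} :=
        Ideal.subset_span (by simp)
      have := Ideal.sub_mem _ h1 h2
      simpa [map_sub, dvd_sub_comm] using this
    · rw [← const_mem_iff]
      have h1 : X - C u₁ ∈ Ideal.span {(p : ℤ_[p][X]) * X, X - C u₂} := by
        rw [← h]; exact Ideal.subset_span (by simp)
      have h2 : X - C u₂ ∈ Ideal.span {(p : ℤ_[p][X]) * X, X - C u₂} :=
        Ideal.subset_span (by simp)
      have := Ideal.sub_mem _ h2 h1
      simpa [map_sub, dvd_sub_comm] using this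
  · rintro ⟨h1, h2⟩
    apply le_antisymm <;> rw [Ideal.span_le] <;>
      rintro x (rfl | rfl)
    · exact Ideal.subset_span (by simp)
    · have hc : (C (u₂ - u₁) : ℤ_[p][X]) ∈ Ideal.span {(p : ℤ_[p][X]) * X, X - C u₂} :=
        (const_mem_iff p u₂ _).2 (by simpa [dvd_sub_comm] using h2)
      have hx : X - C u₂ ∈ Ideal.span {(p : ℤ_[p][X]) * X, X - C u₂} :=
        Ideal.subset_span (by simp)
      have he : X - C u₁ = (X - C u₂) + C (u₂ - u₁) := by rw [map_sub]; ring
      rw [he]; exact Ideal.add_mem _ hx hc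
    · exact Ideal.subset_span (by simp)
    · have hc : (C (u₁ - u₂) : ℤ_[p][X]) ∈ Ideal.span {(p : ℤ_[p][X]) * X, X - C u₁} :=
        (const_mem_iff p u₁ _).2 h1
      have hx : X - C u₁ ∈ Ideal.span {(p : ℤ_[p][X]) * X, X - C u₁} :=
        Ideal.subset_span (by simp)
      have he : X - C u₂ = (X - C u₁) + C (u₁ - u₂) := by rw [map_sub]; ring
      rw [he]; exact Ideal.add_mem _ hx hc

/-- For nonzero `u₁ = v₁ p^{l₁}`, `u₂ = v₂ p^{l₂}` in `ℤ_p` (with `v₁, v₂ ∈ ℤ_p^×`,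
`l₁, l₂ ≥ 0`), the ideals `(pX, X - u₁)` and `(pX, X - u₂)` of `ℤ_p[X]` coincide iff
`l₁ = l₂` and `v₁ v₂⁻¹ ∈ 1 + pℤ_p`. -/
theorem stmt3 (p : ℕ) [Fact p.Prime] (v₁ v₂ : ℤ_[p]ˣ) (l₁ l₂ : ℕ) (u₁ u₂ : ℤ_[p])
    (hu₁ : u₁ = (v₁ : ℤ_[p]) * (p : ℤ_[p]) ^ l₁)
    (hu₂ : u₂ = (v₂ : ℤ_[p]) * (p : ℤ_[p]) ^ l₂) :
    (Ideal.span {(p : ℤ_[p][X]) * X, X - C u₁} =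
        Ideal.span {(p : ℤ_[p][X]) * X, X - C u₂}) ↔
      (l₁ = l₂ ∧ ∃ t : ℤ_[p], ((v₁ * v₂⁻¹ : ℤ_[p]ˣ) : ℤ_[p]) = 1 + (p : ℤ_[p]) * t) := by
  have hp0 : (p : ℤ_[p]) ≠ 0 := Nat.cast_ne_zero.2 (Fact.out : p.Prime).ne_zero
  have hpu : ¬ IsUnit (p : ℤ_[p]) := PadicInt.irreducible_p.not_isUnit
  rw [span_eq_iff]
  have key : ∀ (v : ℤ_[p]ˣ) (l : ℕ) (c : ℤ_[p]),
      ((p : ℤ_[p]) * ((v : ℤ_[p]) * (p : ℤ_[p]) ^ l) ∣ c ↔ (p : ℤ_[p]) ^ (l + 1) ∣ c) := by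
    intro v l c
    constructor
    · rintro ⟨a, ha⟩
      exact ⟨(v : ℤ_[p]) * a, by rw [ha]; ring⟩
    · rintro ⟨a, ha⟩
      exact ⟨((v⁻¹ : ℤ_[p]ˣ) : ℤ_[p]) * a, by
        rw [ha]
        have : (v : ℤ_[p]) * ((v⁻¹ : ℤ_[p]ˣ) : ℤ_[p]) = 1 := by
          rw [← Units.val_mul, mul_inv_cancel, Units.val_one]
        calc (p : ℤ_[p]) ^ (l + 1) * a
            = ((v : ℤ_[p]) * ((v⁻¹ : ℤ_[p]ˣ) : ℤ_[p])) * ((p : ℤ_[p]) ^ (l + 1) * a) := by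
              rw [this, one_mul]
          _ = (p : ℤ_[p]) * ((v : ℤ_[p]) * (p : ℤ_[p]) ^ l) * (((v⁻¹ : ℤ_[p]ˣ) : ℤ_[p]) * a) := by
              ring⟩
  rw [hu₁, hu₂, key, key]
  constructor
  · rintro ⟨h1, h2⟩
    -- first show l₁ = l₂
    have hll : l₁ = l₂ := by
      by_contra hne
      rcases Nat.lt_or_ge l₁ l₂ with hlt | hge
      · -- p^(l₁+1) ∣ u₂, hence p^(l₁+1) ∣ u₁, hence p ∣ v₁
        have hd2 : (p : ℤ_[p]) ^ (l₁ + 1) ∣ (v₂ : ℤ_[p]) * (p : ℤ_[p]) ^ l₂ :=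
          Dvd.dvd.mul_left (pow_dvd_pow _ hlt) _
        have hd1 : (p : ℤ_[p]) ^ (l₁ + 1) ∣ (v₁ : ℤ_[p]) * (p : ℤ_[p]) ^ l₁ := by
          have := dvd_add h1 hd2
          simpa using this
        rw [pow_succ] at hd1
        rcases hd1 with ⟨a, ha⟩
        have : (p : ℤ_[p]) ∣ (v₁ : ℤ_[p]) := by
          refine ⟨a, ?_⟩
          have hcancel : (v₁ : ℤ_[p]) * (p : ℤ_[p]) ^ l₁ = ((p : ℤ_[p]) * a) * (p : ℤ_[p]) ^ l₁ := by
            rw [ha]; ring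
          exact mul_right_cancel₀ (pow_ne_zero _ hp0) hcancel
        exact hpu (isUnit_of_dvd_unit this v₁.isUnit)
      · have hlt : l₂ < l₁ := lt_of_le_of_ne hge (Ne.symm hne)
        have hd1 : (p : ℤ_[p]) ^ (l₂ + 1) ∣ (v₁ : ℤ_[p]) * (p : ℤ_[p]) ^ l₁ :=
          Dvd.dvd.mul_left (pow_dvd_pow _ hlt) _
        have hd2 : (p : ℤ_[p]) ^ (l₂ + 1) ∣ (v₂ : ℤ_[p]) * (p : ℤ_[p]) ^ l₂ := by
          have := dvd_sub hd1 h2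
          simpa using this
        rw [pow_succ] at hd2
        rcases hd2 with ⟨a, ha⟩
        have : (p : ℤ_[p]) ∣ (v₂ : ℤ_[p]) := by
          refine ⟨a, ?_⟩
          have hcancel : (v₂ : ℤ_[p]) * (p : ℤ_[p]) ^ l₂ = ((p : ℤ_[p]) * a) * (p : ℤ_[p]) ^ l₂ := by
            rw [ha]; ring
          exact mul_right_cancel₀ (pow_ne_zero _ hp0) hcancel
        exact hpu (isUnit_of_dvd_unit this v₂.isUnit)
    subst hll
    -- now p^(l₁+1) ∣ p^l₁ (v₁ - v₂)
    have hd : (p : ℤ_[p]) ^ (l₁ + 1) ∣ (p : ℤ_[p]) ^ l₁ * ((v₁ : ℤ_[p]) - (v₂ : ℤ_[p])) := by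
      have := h1
      convert this using 1
      ring
    rw [pow_succ] at hd
    have hps : (p : ℤ_[p]) ∣ ((v₁ : ℤ_[p]) - (v₂ : ℤ_[p])) :=
      (mul_dvd_mul_iff_left (pow_ne_zero l₁ hp0)).1 hd
    rcases hps with ⟨s, hs⟩
    refine ⟨rfl, s * ((v₂⁻¹ : ℤ_[p]ˣ) : ℤ_[p]), ?_⟩
    have hv : (v₂ : ℤ_[p]) * ((v₂⁻¹ : ℤ_[p]ˣ) : ℤ_[p]) = 1 := by
      rw [← Units.val_mul, mul_inv_cancel, Units.val_one]
    have : ((v₁ * v₂⁻¹ : ℤ_[p]ˣ) : ℤ_[p]) = (v₁ : ℤ_[p]) * ((v₂⁻¹ : ℤ_[p]ˣ) : ℤ_[p]) := rfl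
    rw [this]
    have hv1 : (v₁ : ℤ_[p]) = (v₂ : ℤ_[p]) + (p : ℤ_[p]) * s := by
      rw [← hs]; ring
    rw [hv1]
    calc ((v₂ : ℤ_[p]) + (p : ℤ_[p]) * s) * ((v₂⁻¹ : ℤ_[p]ˣ) : ℤ_[p])
        = (v₂ : ℤ_[p]) * ((v₂⁻¹ : ℤ_[p]ˣ) : ℤ_[p]) + (p : ℤ_[p]) * (s * ((v₂⁻¹ : ℤ_[p]ˣ) : ℤ_[p])) := by ring
      _ = 1 + (p : ℤ_[p]) * (s * ((v₂⁻¹ : ℤ_[p]ˣ) : ℤ_[p])) := by rw [hv]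
  · rintro ⟨rfl, t, ht⟩
    have hv : (v₁ : ℤ_[p]) = (v₂ : ℤ_[p]) * (1 + (p : ℤ_[p]) * t) := by
      have h1 : ((v₁ * v₂⁻¹ : ℤ_[p]ˣ) : ℤ_[p]) * (v₂ : ℤ_[p]) = (v₁ : ℤ_[p]) := by
        rw [← Units.val_mul, mul_assoc, inv_mul_cancel, mul_one]
      rw [← h1, ht]; ring
    constructor <;>
    · refine ⟨(v₂ : ℤ_[p]) * t, ?_⟩
      rw [hv, pow_succ]
      ring
end

section
/- Let p be a prime number and let u₁, u₂ ∈ ℤ_p be nonzero. Then the ideals (pX, X − u₁) and (pX, X − u₂) of the polynomial ring ℤ_p[X] are equal if and only if for every positive integer n not divisible by p the element u₁ · u₂^{-1} is an n-th power in ℚ_p^×. -/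
open Polynomial


lemma aux_norm_pt (p : ℕ) [Fact p.Prime] (t : ℤ_[p]) : ‖(p : ℤ_[p]) * t‖ < 1 := by
  have hp : (1:ℝ) < p := Nat.one_lt_cast.2 (Fact.out : p.Prime).one_lt
  rw [norm_mul, PadicInt.norm_p]
  have h1 : (p:ℝ)⁻¹ * ‖t‖ ≤ (p:ℝ)⁻¹ * 1 :=
    mul_le_mul_of_nonneg_left t.norm_le_one (by positivity)
  have h2 : (p:ℝ)⁻¹ < 1 := inv_lt_one_of_one_lt₀ hp
  nlinarith

lemma aux_isUnit_one_add (p : ℕ) [Fact p.Prime] (t : ℤ_[p]) :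
    IsUnit (1 + (p : ℤ_[p]) * t) := by
  have hpt := aux_norm_pt p t
  refine PadicInt.isUnit_iff.2 ?_
  have hne : ‖(1 : ℤ_[p])‖ ≠ ‖(p : ℤ_[p]) * t‖ := by rw [norm_one]; exact (ne_of_lt hpt).symm
  rw [PadicInt.norm_add_eq_max_of_ne hne, norm_one]
  exact max_eq_left (le_of_lt hpt)

lemma aux_span_incl (p : ℕ) [Fact p.Prime] (u t : ℤ_[p]) :
    Ideal.span {(p : ℤ_[p][X]) * X, X - C (u * (1 + p * t))} ≤
      Ideal.span {(p : ℤ_[p][X]) * X, X - C u} := by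
  rw [Ideal.span_le]
  rintro f hf
  simp only [Set.mem_insert_iff, Set.mem_singleton_iff] at hf
  rcases hf with rfl | rfl
  · exact Ideal.subset_span (Set.mem_insert _ _)
  · refine Ideal.mem_span_pair.2 ⟨-C t, 1 + C ((p : ℤ_[p]) * t), ?_⟩
    have hp : (p : ℤ_[p][X]) = C (p : ℤ_[p]) := (map_natCast C p).symm
    rw [hp]
    simp only [map_mul, map_add, map_one]
    ring

lemma aux_hensel (p : ℕ) [Fact p.Prime] (t : ℤ_[p]) (n : ℕ) (hn : 0 < n) (hpn : ¬ p ∣ n) :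
    ∃ z : ℤ_[p], z ^ n = 1 + p * t := by
  set F : Polynomial ℤ_[p] := X ^ n - C (1 + p * t) with hF
  have hev : F.eval 1 = -(p * t) := by simp [hF]
  have hder : F.derivative.eval 1 = n := by
    simp [hF, derivative_pow]
  have hn1 : ‖(n : ℤ_[p])‖ = 1 := by
    rcases lt_or_eq_of_le (PadicInt.norm_le_one (n : ℤ_[p])) with h | h
    · exfalso
      apply hpn
      have := (PadicInt.norm_int_lt_one_iff_dvd (n : ℤ)).1 (by push_cast; exact h)
      exact_mod_cast this
    · exact h
  have hnorm : ‖F.eval 1‖ < ‖F.derivative.eval 1‖ ^ 2 := by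
    rw [hev, hder, hn1, norm_neg, one_pow]
    exact aux_norm_pt p t
  obtain ⟨z, hz, -⟩ := hensels_lemma hnorm
  refine ⟨z, ?_⟩
  have : z ^ n - (1 + p * t) = 0 := by simpa [hF] using hz
  linear_combination this

lemma aux_fermat (p : ℕ) [Fact p.Prime] (z : ℤ_[p]) (hz : ‖z‖ = 1) :
    ∃ t : ℤ_[p], z ^ (p - 1) = 1 + p * t := by
  have h0 : PadicInt.toZMod z ≠ 0 := by
    intro h
    have hk : z ∈ RingHom.ker (PadicInt.toZMod : ℤ_[p] →+* ZMod p) := h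
    rw [PadicInt.ker_toZMod, PadicInt.maximalIdeal_eq_span_p, Ideal.mem_span_singleton,
      ← PadicInt.norm_lt_one_iff_dvd] at hk
    rw [hz] at hk; exact lt_irrefl _ hk
  have hfer : (PadicInt.toZMod z) ^ (p - 1) = 1 := ZMod.pow_card_sub_one_eq_one h0
  have hmem : z ^ (p - 1) - 1 ∈ RingHom.ker (PadicInt.toZMod : ℤ_[p] →+* ZMod p) := by
    simp [RingHom.mem_ker, map_sub, map_pow, hfer]
  rw [PadicInt.ker_toZMod, PadicInt.maximalIdeal_eq_span_p, Ideal.mem_span_singleton] at hmem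
  obtain ⟨t, ht⟩ := hmem
  exact ⟨t, by linear_combination ht⟩

lemma aux_key (p : ℕ) [Fact p.Prime] (u₁ u₂ : ℤ_[p]) (h₁ : u₁ ≠ 0) (h₂ : u₂ ≠ 0)
    (H : ∀ n : ℕ, 0 < n → ¬ (p ∣ n) →
        ∃ w : ℚ_[p], w ≠ 0 ∧ (u₁ : ℚ_[p]) * (u₂ : ℚ_[p])⁻¹ = w ^ n) :
    ∃ t : ℤ_[p], ‖(1 : ℤ_[p]) + p * t‖ ≤ 1 ∧ (u₁ : ℚ_[p]) * (u₂ : ℚ_[p])⁻¹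
      = ((1 + p * t : ℤ_[p]) : ℚ_[p]) := by
  have hp := (Fact.out : p.Prime)
  set c : ℚ_[p] := (u₁ : ℚ_[p]) * (u₂ : ℚ_[p])⁻¹ with hc
  have hc0 : c ≠ 0 :=
    mul_ne_zero ((u₁.coe_ne_zero).2 h₁) (inv_ne_zero ((u₂.coe_ne_zero).2 h₂))
  set k : ℤ := c.valuation with hk
  set m : ℕ := k.natAbs * p + 1 with hm
  set n : ℕ := (p - 1) * m with hn
  have hm0 : 0 < m := Nat.succ_pos _
  have hp1 : 0 < p - 1 := Nat.sub_pos_of_lt hp.one_lt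
  have hn0 : 0 < n := Nat.mul_pos hp1 hm0
  have hpn : ¬ p ∣ n := by
    intro hd
    rcases (Nat.Prime.dvd_mul hp).1 hd with h | h
    · have := Nat.le_of_dvd hp1 h
      have := hp.one_lt
      omega
    · have hpd : p ∣ k.natAbs * p := dvd_mul_left p _
      have : p ∣ 1 := (Nat.dvd_add_right hpd).1 h
      have hone := Nat.dvd_one.1 this; have := hp.one_lt; omega
  obtain ⟨w, hw0, hwn⟩ := H n hn0 hpn
  have hpR0 : (0:ℝ) < p := by exact_mod_cast hp.pos
  have hpR1 : (p:ℝ) ≠ 1 := by exact_mod_cast hp.ne_one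
  have hkey : (p:ℝ) ^ (-k) = (p:ℝ) ^ (-(w.valuation * (n:ℤ))) := by
    rw [← Padic.norm_eq_zpow_neg_valuation hc0, hwn, norm_pow, Padic.norm_eq_zpow_neg_valuation hw0,
      ← zpow_natCast, ← zpow_mul, neg_mul]
  have hk2 : k = w.valuation * n := by
    have := (zpow_right_inj₀ hpR0 hpR1).1 hkey
    omega
  have hvw : w.valuation = 0 := by
    by_contra hv
    have h3 : k.natAbs = w.valuation.natAbs * n := by
      rw [hk2, Int.natAbs_mul]; simp
    have ha1 : 1 ≤ w.valuation.natAbs := Nat.one_le_iff_ne_zero.2 (Int.natAbs_ne_zero.2 hv)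
    have hA : n ≤ k.natAbs := h3 ▸ Nat.le_mul_of_pos_left n (Nat.lt_of_lt_of_le Nat.zero_lt_one ha1)
    have hB : m ≤ n := Nat.le_mul_of_pos_left m hp1
    have hC : k.natAbs + 1 ≤ m := by
      have : k.natAbs * 1 ≤ k.natAbs * p := Nat.mul_le_mul_left _ hp.pos
      omega
    omega
  have hwnorm : ‖w‖ = 1 := by
    rw [Padic.norm_eq_zpow_neg_valuation hw0, hvw]; simp
  set z : ℤ_[p] := ⟨w, le_of_eq hwnorm⟩ with hz
  set y : ℤ_[p] := z ^ m with hy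
  have hy1 : ‖y‖ = 1 := by
    rw [hy, PadicInt.norm_def, PadicInt.coe_pow]
    show ‖w ^ m‖ = 1
    rw [norm_pow, hwnorm, one_pow]
  -- Fermat: y ^ (p-1) = 1 + p * t
  have h0 : PadicInt.toZMod y ≠ 0 := by
    intro h
    have hker : y ∈ RingHom.ker (PadicInt.toZMod : ℤ_[p] →+* ZMod p) := h
    rw [PadicInt.ker_toZMod, PadicInt.maximalIdeal_eq_span_p, Ideal.mem_span_singleton,
      ← PadicInt.norm_lt_one_iff_dvd] at hker
    rw [hy1] at hker; exact lt_irrefl _ hker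
  have hfer : (PadicInt.toZMod y) ^ (p - 1) = 1 := ZMod.pow_card_sub_one_eq_one h0
  have hmem : y ^ (p - 1) - 1 ∈ RingHom.ker (PadicInt.toZMod : ℤ_[p] →+* ZMod p) := by
    simp [RingHom.mem_ker, map_sub, map_pow, hfer]
  rw [PadicInt.ker_toZMod, PadicInt.maximalIdeal_eq_span_p, Ideal.mem_span_singleton] at hmem
  obtain ⟨t, ht⟩ := hmem
  have htt : y ^ (p - 1) = 1 + (p:ℤ_[p]) * t := by linear_combination ht
  refine ⟨t, (1 + (p:ℤ_[p]) * t).norm_le_one, ?_⟩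
  rw [← htt]
  push_cast
  rw [hwn, hy, hz]
  push_cast
  show w ^ n = (w ^ m) ^ (p - 1)
  rw [← pow_mul, mul_comm m (p-1)]


/-- For nonzero `u₁, u₂ ∈ ℤ_p`, the ideals `(pX, X - u₁)` and `(pX, X - u₂)` of
`ℤ_p[X]` coincide iff `u₁ u₂⁻¹` is an `n`-th power in `ℚ_p^×` for every positive
integer `n` not divisible by `p`. -/
theorem stmt4 (p : ℕ) [Fact p.Prime] (u₁ u₂ : ℤ_[p]) (h₁ : u₁ ≠ 0) (h₂ : u₂ ≠ 0) :
    (Ideal.span {(p : ℤ_[p][X]) * X, X - C u₁} =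
        Ideal.span {(p : ℤ_[p][X]) * X, X - C u₂}) ↔
      ∀ n : ℕ, 0 < n → ¬ (p ∣ n) →
        ∃ w : ℚ_[p], w ≠ 0 ∧ (u₁ : ℚ_[p]) * (u₂ : ℚ_[p])⁻¹ = w ^ n := by
  constructor
  · -- ideal equality → power condition
    intro h n hn hpn
    -- first extract t with u₁ = u₂ * (1 + p * t)
    have hmem : (X - C u₁ : ℤ_[p][X]) ∈ Ideal.span {(p : ℤ_[p][X]) * X, X - C u₂} := by
      rw [← h]
      exact Ideal.subset_span (by simp)
    obtain ⟨f, g, hfg⟩ := Ideal.mem_span_pair.1 hmem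
    have hev := congrArg (Polynomial.eval u₂) hfg
    simp only [eval_add, eval_mul, eval_sub, eval_C, eval_X, eval_natCast, sub_self,
      mul_zero, add_zero] at hev
    set s : ℤ_[p] := f.eval u₂ with hs
    have hP : u₁ = u₂ * (1 + (p : ℤ_[p]) * (-s)) := by linear_combination hev
    obtain ⟨z, hzn⟩ := aux_hensel p (-s) n hn hpn
    have hz0 : z ≠ 0 := by
      intro h0
      rw [h0, zero_pow hn.ne'] at hzn
      apply h₁
      rw [hP, ← hzn, mul_zero]
    refine ⟨(z : ℚ_[p]), (z.coe_ne_zero).2 hz0, ?_⟩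
    have hcast : (u₁ : ℚ_[p]) = (u₂ : ℚ_[p]) * ((z : ℚ_[p]) ^ n) := by
      have : u₁ = u₂ * z ^ n := by rw [hzn]; exact hP
      exact_mod_cast congrArg (fun a : ℤ_[p] => (a : ℚ_[p])) this
    rw [hcast]
    rw [mul_comm ((u₂ : ℚ_[p])) _, mul_assoc, mul_inv_cancel₀ ((u₂.coe_ne_zero).2 h₂), mul_one]
  · -- power condition → ideal equality
    intro H
    obtain ⟨t, -, hct⟩ := aux_key p u₁ u₂ h₁ h₂ H
    -- u₁ = u₂ * (1 + p * t) in ℤ_[p]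
    have hP : u₁ = u₂ * (1 + (p : ℤ_[p]) * t) := by
      have h2 : (u₂ : ℚ_[p]) ≠ 0 := (u₂.coe_ne_zero).2 h₂
      apply Subtype.coe_inj.mp
      have hq : (u₁ : ℚ_[p]) = (u₂ : ℚ_[p]) * ((1 + (p : ℤ_[p]) * t : ℤ_[p]) : ℚ_[p]) := by
        field_simp at hct
        rw [hct]
      rw [hq]; push_cast; ring
    -- symmetric version
    obtain ⟨ε, hε⟩ := aux_isUnit_one_add p t
    set δ : ℤ_[p] := ((ε⁻¹ : ℤ_[p]ˣ) : ℤ_[p]) with hδdef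
    have hδ : δ * (1 + (p : ℤ_[p]) * t) = 1 := by
      rw [hδdef, ← hε, Units.inv_mul]
    have hQ : u₂ = u₁ * (1 + (p : ℤ_[p]) * (-(δ * t))) := by
      rw [hP]; linear_combination (u₂ * (p : ℤ_[p]) * t) * hδ
    apply le_antisymm
    · have := aux_span_incl p u₂ t
      rwa [← hP] at this
    · have := aux_span_incl p u₁ (-(δ * t))
      rwa [← hQ] at this
end

section
/- Let p be a prime number with p ≡ 3 (mod 4). Then the quaternion algebra ℍ[ℚ_p, p, p] over the field ℚ_p of p-adic numbers (the ℚ_p-algebra with basis 1, i, j, k satisfying i² = p, j² = p, ij = −ji = k) is a division algebra: every nonzero element of ℍ[ℚ_p, p, p] is invertible. -/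
open Quaternion

section Aux

variable {p : ℕ} [Fact p.Prime]

lemma aux1 (hp : p % 4 = 3) (u : ℤ_[p]) : ‖1 + u ^ 2‖ = 1 := by
  rcases lt_or_eq_of_le (PadicInt.norm_le_one (1 + u ^ 2)) with h | h
  · exfalso
    rw [PadicInt.norm_lt_one_iff_dvd] at h
    have h0 : PadicInt.toZMod (1 + u ^ 2) = 0 := by
      rw [← RingHom.mem_ker, PadicInt.ker_toZMod, PadicInt.maximalIdeal_eq_span_p,
        Ideal.mem_span_singleton]
      exact h
    have hsq : IsSquare (-1 : ZMod p) := by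
      refine ⟨PadicInt.toZMod u, ?_⟩
      rw [map_add, map_one, map_pow] at h0
      have h1 := eq_neg_of_add_eq_zero_right h0
      rw [← h1]; ring
    rw [ZMod.exists_sq_eq_neg_one_iff] at hsq
    exact hsq hp
  · exact h

lemma aux2' (hp : p % 4 = 3) (x y : ℚ_[p]) (hxy : ‖y‖ ≤ ‖x‖) :
    ‖x ^ 2 + y ^ 2‖ = max ‖x‖ ‖y‖ ^ 2 := by
  rcases eq_or_ne x 0 with rfl | hx
  · have : y = 0 := by
      have := le_antisymm (by simpa using hxy) (norm_nonneg y)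
      simpa using this
    simp [this]
  · have hu : ‖y / x‖ ≤ 1 := by
      rw [norm_div, div_le_one (norm_pos_iff.mpr hx)]
      exact hxy
    set u : ℤ_[p] := ⟨y / x, hu⟩ with hu_def
    have hcoe : ((1 + u ^ 2 : ℤ_[p]) : ℚ_[p]) = 1 + (y / x) ^ 2 := by
      push_cast
      rfl
    have hfac : x ^ 2 + y ^ 2 = x ^ 2 * ((1 + u ^ 2 : ℤ_[p]) : ℚ_[p]) := by
      rw [hcoe]
      field_simp
    rw [hfac, norm_mul, ← PadicInt.norm_def, aux1 hp, mul_one,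
      max_eq_left hxy, norm_pow]

lemma aux2 (hp : p % 4 = 3) (x y : ℚ_[p]) : ‖x ^ 2 + y ^ 2‖ = max ‖x‖ ‖y‖ ^ 2 := by
  rcases le_total ‖y‖ ‖x‖ with h | h
  · exact aux2' hp x y h
  · rw [add_comm, max_comm]
    exact aux2' hp y x h

lemma aux3 (hp : p % 4 = 3) {x y : ℚ_[p]} (h : x ^ 2 + y ^ 2 = 0) : x = 0 ∧ y = 0 := by
  have h2 := aux2 hp x y
  rw [h, norm_zero] at h2
  have hmax : max ‖x‖ ‖y‖ = 0 := by
    nlinarith [le_max_left ‖x‖ ‖y‖, norm_nonneg x]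
  constructor
  · have : ‖x‖ ≤ 0 := hmax ▸ le_max_left _ _
    simpa using le_antisymm this (norm_nonneg x)
  · have : ‖y‖ ≤ 0 := hmax ▸ le_max_right _ _
    simpa using le_antisymm this (norm_nonneg y)

lemma aux4 (hp : p % 4 = 3) (a b c d : ℚ_[p])
    (h : a ^ 2 - p * b ^ 2 - p * c ^ 2 + p ^ 2 * d ^ 2 = 0) :
    a = 0 ∧ b = 0 ∧ c = 0 ∧ d = 0 := by
  have hp0 : (p : ℚ_[p]) ≠ 0 := Nat.cast_ne_zero.mpr (Fact.out : p.Prime).ne_zero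
  have hpr : (1 : ℝ) < (p : ℝ) := by exact_mod_cast (Fact.out : p.Prime).one_lt
  have key : a ^ 2 + ((p : ℚ_[p]) * d) ^ 2 = p * (b ^ 2 + c ^ 2) := by
    linear_combination h
  rcases eq_or_ne (b ^ 2 + c ^ 2) 0 with hbc | hbc
  · obtain ⟨hb, hc⟩ := aux3 hp hbc
    have had : a = 0 ∧ (p : ℚ_[p]) * d = 0 := by
      apply aux3 hp
      rw [key, hbc, mul_zero]
    refine ⟨had.1, hb, hc, ?_⟩
    rcases mul_eq_zero.mp had.2 with h' | h'
    · exact absurd h' hp0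
    · exact h'
  · exfalso
    have hR : (p : ℚ_[p]) * (b ^ 2 + c ^ 2) ≠ 0 := mul_ne_zero hp0 hbc
    have hLne : a ^ 2 + ((p : ℚ_[p]) * d) ^ 2 ≠ 0 := by rw [key]; exact hR
    have hnorm : max ‖a‖ ‖(p : ℚ_[p]) * d‖ ^ 2 = ‖(p : ℚ_[p])‖ * max ‖b‖ ‖c‖ ^ 2 := by
      rw [← aux2 hp a ((p : ℚ_[p]) * d), ← aux2 hp b c, key, norm_mul]
    have hmax1 : max ‖a‖ ‖(p : ℚ_[p]) * d‖ ≠ 0 := by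
      intro h'
      have h2 := aux2 hp a ((p : ℚ_[p]) * d)
      rw [h'] at h2
      simp only [ne_eq, zero_pow, OfNat.ofNat_ne_zero, not_false_eq_true,
        norm_eq_zero] at h2
      exact hLne h2
    have hmax2 : max ‖b‖ ‖c‖ ≠ 0 := by
      intro h'
      have h2 := aux2 hp b c
      rw [h'] at h2
      simp only [ne_eq, zero_pow, OfNat.ofNat_ne_zero, not_false_eq_true,
        norm_eq_zero] at h2
      exact hbc h2
    obtain ⟨z1, hz1, hz1e⟩ : ∃ z1 : ℚ_[p], z1 ≠ 0 ∧ max ‖a‖ ‖(p : ℚ_[p]) * d‖ = ‖z1‖ := by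
      rcases max_cases ‖a‖ ‖(p : ℚ_[p]) * d‖ with ⟨he, _⟩ | ⟨he, _⟩
      · exact ⟨a, fun h0 => hmax1 (by rw [he, h0, norm_zero]), he⟩
      · exact ⟨(p : ℚ_[p]) * d, fun h0 => hmax1 (by rw [he, h0, norm_zero]), he⟩
    obtain ⟨z2, hz2, hz2e⟩ : ∃ z2 : ℚ_[p], z2 ≠ 0 ∧ max ‖b‖ ‖c‖ = ‖z2‖ := by
      rcases max_cases ‖b‖ ‖c‖ with ⟨he, _⟩ | ⟨he, _⟩
      · exact ⟨b, fun h0 => hmax2 (by rw [he, h0, norm_zero]), he⟩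
      · exact ⟨c, fun h0 => hmax2 (by rw [he, h0, norm_zero]), he⟩
    rw [hz1e, hz2e, Padic.norm_eq_zpow_neg_valuation hz1, Padic.norm_eq_zpow_neg_valuation hz2,
      Padic.norm_p] at hnorm
    have hppos : (0 : ℝ) < (p : ℝ) := by linarith
    have hne1 : (p : ℝ) ≠ 1 := by linarith
    have hz : (p : ℝ) ^ ((-z1.valuation) * 2) = (p : ℝ) ^ (-(1 : ℤ) + (-z2.valuation) * 2) := by
      rw [zpow_add₀ hppos.ne', zpow_mul, zpow_mul, zpow_neg_one, zpow_two, zpow_two,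
        ← pow_two, ← pow_two]
      exact hnorm
    have := zpow_right_injective₀ hppos hne1 hz
    omega

end Aux

/-- For a prime `p ≡ 3 (mod 4)`, the quaternion algebra `(p, p)` over `ℚ_p` is a
division algebra: every nonzero element is invertible. -/
theorem stmt6 (p : ℕ) [Fact p.Prime] (hp : p % 4 = 3) :
    ∀ x : ℍ[ℚ_[p], (p : ℚ_[p]), (p : ℚ_[p])], x ≠ 0 → IsUnit x := by
  intro x hx
  set N : ℚ_[p] := (x * star x).re with hN_def
  have hN : N = x.re ^ 2 - p * x.imI ^ 2 - p * x.imJ ^ 2 + p ^ 2 * x.imK ^ 2 := by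
    simp [hN_def, QuaternionAlgebra.re_mul]
    ring
  have hN0 : N ≠ 0 := by
    intro h0
    rw [hN] at h0
    obtain ⟨h1, h2, h3, h4⟩ := aux4 hp _ _ _ _ h0
    exact hx (QuaternionAlgebra.ext h1 h2 h3 h4)
  refine ⟨⟨x, (N⁻¹ : ℚ_[p]) • star x, ?_, ?_⟩, rfl⟩
  · rw [Algebra.mul_smul_comm, QuaternionAlgebra.mul_star_eq_coe, ← hN_def,
      QuaternionAlgebra.smul_coe, inv_mul_cancel₀ hN0, QuaternionAlgebra.coe_one]
  · have hN' : (star x * x).re = N := by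
      simp [hN_def, QuaternionAlgebra.re_mul]
    rw [smul_mul_assoc, QuaternionAlgebra.star_mul_eq_coe, hN',
      QuaternionAlgebra.smul_coe, inv_mul_cancel₀ hN0, QuaternionAlgebra.coe_one]
end

section
/- Let p be a prime number with p ≡ 3 (mod 4). Then the quaternion algebras ℍ[ℚ_p, p, p] and ℍ[ℚ_p, p, −p] over the field ℚ_p of p-adic numbers are not isomorphic as ℚ_p-algebras: indeed, every nonzero element of ℍ[ℚ_p, p, p] is invertible, whereas ℍ[ℚ_p, p, −p] contains a nonzero element whose square is zero (namely i + j), so it is not a division ring. -/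
open Quaternion QuaternionAlgebra

section aux

variable {p : ℕ} [hp' : Fact p.Prime]

lemma aux_no_sqrt_neg_one (hp : p % 4 = 3) (u : ℚ_[p]) : u ^ 2 ≠ -1 := by
  intro h
  have hu : ‖u‖ = 1 := by
    have h2 : ‖u‖ ^ 2 = 1 := by rw [← norm_pow, h]; simp
    nlinarith [norm_nonneg u]
  set z : ℤ_[p] := ⟨u, le_of_eq hu⟩ with hzdef
  have hz2 : (z ^ 2 : ℤ_[p]) = -1 := by
    apply Subtype.ext
    push_cast [hzdef]
    exact h
  have : ((PadicInt.toZMod z) ^ 2 : ZMod p) = -1 := by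
    rw [← map_pow, hz2, map_neg, map_one]
  have hsq : IsSquare (-1 : ZMod p) := ⟨PadicInt.toZMod z, by rw [← this]; ring⟩
  exact (ZMod.exists_sq_eq_neg_one_iff.mp hsq) hp

lemma aux_sq_add_sq (hp : p % 4 = 3) {a b : ℚ_[p]} (h : a ^ 2 + b ^ 2 = 0) :
    a = 0 ∧ b = 0 := by
  by_cases ha : a = 0
  · refine ⟨ha, ?_⟩
    subst ha
    have hb2 : b ^ 2 = 0 := by linear_combination h
    exact pow_eq_zero_iff (two_ne_zero) |>.mp hb2
  · exfalso
    apply aux_no_sqrt_neg_one hp (b / a)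
    rw [div_pow, div_eq_iff (pow_ne_zero 2 ha)]
    linear_combination h

lemma aux_unit_one_add_sq (hp : p % 4 = 3) {c : ℚ_[p]} (hc : ‖c‖ ≤ 1) :
    ‖1 + c ^ 2‖ = 1 := by
  set z : ℤ_[p] := ⟨c, hc⟩ with hzdef
  have key : ‖(1 + z ^ 2 : ℤ_[p])‖ = 1 := by
    by_contra hne
    have hlt : ‖(1 + z ^ 2 : ℤ_[p])‖ < 1 :=
      lt_of_le_of_ne (PadicInt.norm_le_one _) hne
    have hker : PadicInt.toZMod (1 + z ^ 2) = 0 := by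
      have : (1 + z ^ 2) ∈ IsLocalRing.maximalIdeal ℤ_[p] := by
        rw [IsLocalRing.mem_maximalIdeal, PadicInt.mem_nonunits]
        exact hlt
      rw [← PadicInt.ker_toZMod] at this
      exact this
    have : ((PadicInt.toZMod z) ^ 2 : ZMod p) = -1 := by
      have := hker
      rw [map_add, map_one, map_pow] at this
      linear_combination this
    have hsq : IsSquare (-1 : ZMod p) := ⟨PadicInt.toZMod z, by rw [← this]; ring⟩
    exact (ZMod.exists_sq_eq_neg_one_iff.mp hsq) hp
  have : ‖(1 + z ^ 2 : ℤ_[p])‖ = ‖((1 + z ^ 2 : ℤ_[p]) : ℚ_[p])‖ := PadicInt.norm_def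
  rw [this] at key
  have hco : ((1 + z ^ 2 : ℤ_[p]) : ℚ_[p]) = 1 + c ^ 2 := by push_cast [hzdef]; rfl
  rwa [hco] at key

lemma aux_val_eq_zero {x : ℚ_[p]} (hx : ‖x‖ = 1) : x.valuation = 0 := by
  have hx0 : x ≠ 0 := by intro h; rw [h] at hx; simp at hx
  have := Padic.norm_eq_zpow_neg_valuation hx0
  rw [hx] at this
  have hp1 : (1 : ℝ) < (p : ℝ) := by
    exact_mod_cast hp'.out.one_lt
  have := this.symm
  rw [show (1 : ℝ) = (p : ℝ) ^ (0 : ℤ) by simp] at this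
  have := zpow_right_injective₀ (by positivity) (ne_of_gt hp1) this
  linarith [this]

lemma aux_val_sq_add_sq (hp : p % 4 = 3) {a b : ℚ_[p]} (ha : a ≠ 0) (hab : ‖b‖ ≤ ‖a‖) :
    (a ^ 2 + b ^ 2).valuation = 2 * a.valuation := by
  set c : ℚ_[p] := b / a with hc
  have hcle : ‖c‖ ≤ 1 := by
    rw [hc, norm_div, div_le_one (norm_pos_iff.mpr ha)]
    exact hab
  have hnorm : ‖1 + c ^ 2‖ = 1 := aux_unit_one_add_sq hp hcle
  have hW0 : (1 + c ^ 2) ≠ 0 := by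
    intro h; rw [h] at hnorm; simp at hnorm
  have ha2 : a ^ 2 ≠ 0 := pow_ne_zero _ ha
  have hfact : a ^ 2 + b ^ 2 = a ^ 2 * (1 + c ^ 2) := by
    rw [hc]; field_simp
  rw [hfact, Padic.valuation_mul ha2 hW0, aux_val_eq_zero hnorm]
  have : (a ^ 2).valuation = 2 * a.valuation := by
    rw [sq, Padic.valuation_mul ha ha]; ring
  rw [this]; ring

lemma aux_sq_add_sq_even (hp : p % 4 = 3) {a b : ℚ_[p]} (h : a ≠ 0 ∨ b ≠ 0) :
    a ^ 2 + b ^ 2 ≠ 0 ∧ Even ((a ^ 2 + b ^ 2).valuation) := by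
  have key : ∀ a b : ℚ_[p], a ≠ 0 → ‖b‖ ≤ ‖a‖ →
      a ^ 2 + b ^ 2 ≠ 0 ∧ Even ((a ^ 2 + b ^ 2).valuation) := by
    intro a b ha hab
    refine ⟨fun h0 => ha (aux_sq_add_sq hp h0).1, ?_⟩
    rw [aux_val_sq_add_sq hp ha hab]
    exact ⟨a.valuation, by ring⟩
  rcases le_total ‖b‖ ‖a‖ with hle | hle
  · have ha : a ≠ 0 := by
      intro h0
      rcases h with h | h
      · exact h h0
      · apply h; rw [h0] at hle; simpa using le_antisymm (by simpa using hle) (norm_nonneg b)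
    exact key a b ha hle
  · have hb : b ≠ 0 := by
      intro h0
      rcases h with h | h
      · apply h; rw [h0] at hle; simpa using le_antisymm (by simpa using hle) (norm_nonneg a)
      · exact h h0
    rw [show a ^ 2 + b ^ 2 = b ^ 2 + a ^ 2 by ring]
    exact key b a hb hle

lemma aux_aniso (hp : p % 4 = 3) {x0 x1 x2 x3 : ℚ_[p]}
    (h : x0 ^ 2 - p * x1 ^ 2 - p * x2 ^ 2 + p ^ 2 * x3 ^ 2 = 0) :
    x0 = 0 ∧ x1 = 0 ∧ x2 = 0 ∧ x3 = 0 := by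
  have hp0 : (p : ℚ_[p]) ≠ 0 := by
    exact_mod_cast (Nat.cast_ne_zero (R := ℚ_[p])).mpr hp'.out.ne_zero
  have heq : x0 ^ 2 + (↑p * x3) ^ 2 = ↑p * (x1 ^ 2 + x2 ^ 2) := by linear_combination h
  by_cases h12 : x1 = 0 ∧ x2 = 0
  · obtain ⟨h1, h2⟩ := h12
    rw [h1, h2] at heq
    have heq' : x0 ^ 2 + ((p : ℚ_[p]) * x3) ^ 2 = 0 := by
      rw [heq]; ring
    obtain ⟨h0, h3⟩ := aux_sq_add_sq hp heq'
    refine ⟨h0, h1, h2, ?_⟩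
    rcases mul_eq_zero.mp h3 with h | h
    · exact absurd h hp0
    · exact h
  · exfalso
    have h12' : x1 ≠ 0 ∨ x2 ≠ 0 := by tauto
    obtain ⟨ht0, ⟨n, hn⟩⟩ := aux_sq_add_sq_even hp h12'
    have hpt0 : (↑p : ℚ_[p]) * (x1 ^ 2 + x2 ^ 2) ≠ 0 := mul_ne_zero hp0 ht0
    have hs0 : x0 ^ 2 + (↑p * x3) ^ 2 ≠ 0 := by rw [heq]; exact hpt0
    have h03 : x0 ≠ 0 ∨ (↑p : ℚ_[p]) * x3 ≠ 0 := by
      by_contra hcon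
      push_neg at hcon
      obtain ⟨h0, h3⟩ := hcon
      apply hs0
      rw [h0, h3]; ring
    obtain ⟨-, ⟨m, hm⟩⟩ := aux_sq_add_sq_even hp h03
    have hval : (x0 ^ 2 + ((p : ℚ_[p]) * x3) ^ 2).valuation
        = 1 + (x1 ^ 2 + x2 ^ 2).valuation := by
      rw [heq, Padic.valuation_mul hp0 ht0, Padic.valuation_p]
    rw [hm, hn] at hval
    omega

end aux

/-- For a prime `p ≡ 3 (mod 4)`, the quaternion algebras `(p, p)` and `(p, -p)` over
`ℚ_p` are not isomorphic as `ℚ_p`-algebras: every nonzero element of `ℍ[ℚ_p, p, p]`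
is invertible, while `ℍ[ℚ_p, p, -p]` contains the nonzero element `i + j` of square
zero, hence is not a division ring. -/
theorem stmt7 (p : ℕ) [Fact p.Prime] (hp : p % 4 = 3) :
    (∀ x : ℍ[ℚ_[p], (p : ℚ_[p]), (p : ℚ_[p])], x ≠ 0 → IsUnit x) ∧
    ((QuaternionAlgebra.mk 0 1 1 0 : ℍ[ℚ_[p], (p : ℚ_[p]), -(p : ℚ_[p])]) ≠ 0 ∧
      (QuaternionAlgebra.mk 0 1 1 0 : ℍ[ℚ_[p], (p : ℚ_[p]), -(p : ℚ_[p])]) ^ 2 = 0) ∧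
    IsEmpty (ℍ[ℚ_[p], (p : ℚ_[p]), (p : ℚ_[p])] ≃ₐ[ℚ_[p]]
      ℍ[ℚ_[p], (p : ℚ_[p]), -(p : ℚ_[p])]) := by
  have part1 : ∀ x : ℍ[ℚ_[p], (p : ℚ_[p]), (p : ℚ_[p])], x ≠ 0 → IsUnit x := by
    intro x hx
    set n : ℚ_[p] := (x * star x).re with hndef
    have hmul : x * star x = (n : ℍ[ℚ_[p], (p : ℚ_[p]), (p : ℚ_[p])]) :=
      QuaternionAlgebra.mul_star_eq_coe x
    have hn : n = x.re ^ 2 - p * x.imI ^ 2 - p * x.imJ ^ 2 + (p : ℚ_[p]) ^ 2 * x.imK ^ 2 := by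
      simp [hndef, QuaternionAlgebra.re_mul]
      ring
    have hn0 : n ≠ 0 := by
      intro h0
      apply hx
      rw [hn] at h0
      obtain ⟨h1, h2, h3, h4⟩ := aux_aniso hp h0
      ext <;> simp [h1, h2, h3, h4]
    refine ⟨⟨x, n⁻¹ • star x, ?_, ?_⟩, rfl⟩
    · rw [mul_smul_comm, hmul, ← QuaternionAlgebra.coe_smul, smul_eq_mul,
        inv_mul_cancel₀ hn0, QuaternionAlgebra.coe_one]
    · rw [smul_mul_assoc, star_comm_self', hmul, ← QuaternionAlgebra.coe_smul, smul_eq_mul,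
        inv_mul_cancel₀ hn0, QuaternionAlgebra.coe_one]
  have hp0 : (p : ℚ_[p]) ≠ 0 := by
    exact_mod_cast (Nat.cast_ne_zero (R := ℚ_[p])).mpr (Fact.out (p := p.Prime)).ne_zero
  have part2ne : (QuaternionAlgebra.mk 0 1 1 0 : ℍ[ℚ_[p], (p : ℚ_[p]), -(p : ℚ_[p])]) ≠ 0 := by
    intro h
    have := congrArg QuaternionAlgebra.imI h
    simp at this
  have part2sq : (QuaternionAlgebra.mk 0 1 1 0 : ℍ[ℚ_[p], (p : ℚ_[p]), -(p : ℚ_[p])]) ^ 2 = 0 := by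
    rw [sq]
    ext <;>
      simp [QuaternionAlgebra.re_mul, QuaternionAlgebra.imI_mul, QuaternionAlgebra.imJ_mul,
        QuaternionAlgebra.imK_mul]
  refine ⟨part1, ⟨part2ne, part2sq⟩, ⟨fun f => ?_⟩⟩
  set v : ℍ[ℚ_[p], (p : ℚ_[p]), -(p : ℚ_[p])] := QuaternionAlgebra.mk 0 1 1 0 with hv
  set y : ℍ[ℚ_[p], (p : ℚ_[p]), (p : ℚ_[p])] := f.symm v with hy
  have hy0 : y ≠ 0 := by
    intro h
    apply part2ne
    exact f.symm.injective (by rw [map_zero]; exact h)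
  have hysq : y * y = 0 := by
    have : y ^ 2 = f.symm (v ^ 2) := by rw [hy, ← map_pow]
    rw [part2sq, map_zero] at this
    rw [← sq]; exact this
  have hu : IsUnit y := part1 y hy0
  exact hy0 (hu.mul_left_cancel (show y * y = y * 0 by rw [mul_zero]; exact hysq))
end
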